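/- Let M be a compact metric space with Borel probability measure m, f : M → M Borel measurable, and M' ⊆ M a Borel set with M' ⊆ f⁻¹(M') and m(M') ≥ α > 0. Then there exists a nonempty compact f-invariant set K with m(B(K) ∩ M') ≥ α which is minimal with this property: no proper nonempty compact f-invariant subset K' ⊊ K satisfies m(B(K') ∩ M') ≥ α. -/

import Mathlib

/-!
The admissible sets `K` (nonempty, compact, `f`-invariant, `m(B(K) ∩ M') ≥ α`) include `M` itself,
so by Zorn's lemma applied to inclusion it suffices that the intersection `K∞` of a chain
of admissible sets is admissible. Compactness makes `K∞` nonempty and forces the members of the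
chain into every thickening of `K∞`, so one can pick a sequence `Dₙ` in the chain with
`Dₙ ⊆ thickening (1/(n+1)) K∞`. Every point of `⋂ₙ B(Dₙ)` then visits each neighborhood of `K∞`
with frequency one, and continuity of `m` from above along the decreasing sets `B(Dₙ) ∩ M'`
gives `m(B(K∞) ∩ M') ≥ α`.
-/

open MeasureTheory Filter Metric Set
open scoped Classical ENNReal Topology

/-- Frequency of visits, up to time `n - 1`, of the orbit of `x` to the
`ε`-neighborhood of `K`: `(1/n) · #{0 ≤ j ≤ n−1 : dist(f^j(x), K) < ε}`. -/
noncomputable def visitFreq {M : Type*} [MetricSpace M] (f : M → M) (K : Set M) (ε : ℝ)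
    (x : M) (n : ℕ) : ℝ :=
  (((Finset.range n).filter (fun j => infDist (f^[j] x) K < ε)).card : ℝ) / n

/-- Basin of statistical attraction of `K`. -/
def statBasin {M : Type*} [MetricSpace M] (f : M → M) (K : Set M) : Set M :=
  {x | ∀ ε > 0, Tendsto (fun n => visitFreq f K ε x n) atTop (𝓝 1)}

/-- The auxiliary basin `B_ε(K) = {x : liminf_n (1/n)·#{j < n : dist(f^j(x),K) < ε} > 1 − ε}`. -/
def statBasinEps {M : Type*} [MetricSpace M] (f : M → M) (K : Set M) (ε : ℝ) : Set M :=
  {x | 1 - ε < atTop.liminf (fun n => visitFreq f K ε x n)}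

section Basin

variable {M : Type*} [MetricSpace M] {f : M → M}

lemma visitFreq_le_one (f : M → M) (K : Set M) (ε : ℝ) (x : M) (n : ℕ) :
    visitFreq f K ε x n ≤ 1 :=
  div_le_one_of_le₀
    (by exact_mod_cast (Finset.card_filter_le _ _).trans_eq (Finset.card_range n)) n.cast_nonneg

lemma visitFreq_mono {K L : Set M} {ε δ : ℝ} (h : ∀ y, infDist y L < δ → infDist y K < ε)
    (x : M) (n : ℕ) : visitFreq f L δ x n ≤ visitFreq f K ε x n := by
  refine div_le_div_of_nonneg_right ?_ n.cast_nonneg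
  exact_mod_cast Finset.card_le_card (Finset.monotone_filter_right _ fun j _ => h _)

lemma mem_statBasin_of_forall_tendsto_visitFreq {K : Set M} {x : M}
    (h : ∀ ε > 0, ∃ L δ, Tendsto (fun n => visitFreq f L δ x n) atTop (𝓝 1) ∧
      ∀ y, infDist y L < δ → infDist y K < ε) :
    x ∈ statBasin f K := fun ε hε => by
  obtain ⟨L, δ, hL, hLK⟩ := h ε hε
  exact tendsto_of_tendsto_of_tendsto_of_le_of_le hL tendsto_const_nhds (visitFreq_mono hLK x)
    (visitFreq_le_one f K ε x)

lemma statBasin_mono {K L : Set M} (hK : K.Nonempty) (hKL : K ⊆ L) :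
    statBasin f K ⊆ statBasin f L := fun _ hx =>
  mem_statBasin_of_forall_tendsto_visitFreq fun ε hε =>
    ⟨K, ε, hx ε hε, fun _ hy => (infDist_le_infDist_of_subset hKL hK).trans_lt hy⟩

lemma statBasin_univ : statBasin f univ = univ := by
  refine eq_univ_of_forall fun x ε hε => ?_
  have hfreq : ∀ n : ℕ, visitFreq f univ ε x n = n / n := fun n => by
    rw [visitFreq, Finset.filter_true_of_mem, Finset.card_range]
    exact fun j _ => (infDist_zero_of_mem (mem_univ _)).trans_lt hε
  refine tendsto_const_nhds.congr' (eventually_atTop.2 ⟨1, fun n hn => ?_⟩)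
  exact ((hfreq n).trans (div_self (by exact_mod_cast Nat.one_le_iff_ne_zero.mp hn))).symm

lemma infDist_lt_add_of_subset_thickening {K L : Set M} {y : M} {ε δ : ℝ} (hL : L.Nonempty)
    (hLK : L ⊆ thickening δ K) (hy : infDist y L < ε) : infDist y K < ε + δ := by
  obtain ⟨z, hzL, hyz⟩ := (infDist_lt_iff hL).1 hy
  obtain ⟨w, hwK, hzw⟩ := mem_thickening_iff.1 (hLK hzL)
  calc infDist y K ≤ dist y w := infDist_le_dist_of_mem hwK
    _ ≤ dist y z + dist z w := dist_triangle y z w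
    _ < ε + δ := add_lt_add hyz hzw

lemma iInter_statBasin_subset_statBasin {D : ℕ → Set M} {K : Set M} (hD : ∀ n, (D n).Nonempty)
    (hDK : ∀ ε > 0, ∃ n, D n ⊆ thickening ε K) :
    ⋂ n, statBasin f (D n) ⊆ statBasin f K := fun x hx =>
  mem_statBasin_of_forall_tendsto_visitFreq fun ε hε => by
    obtain ⟨n, hn⟩ := hDK (ε / 2) (half_pos hε)
    refine ⟨D n, ε / 2, mem_iInter.1 hx n (ε / 2) (half_pos hε), fun y hy => ?_⟩
    linarith [infDist_lt_add_of_subset_thickening (hD n) hn hy]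

lemma IsChain.exists_seq_subset_thickening_sInter {c : Set (Set M)}
    (hc : IsChain (· ⊆ ·) c) (hne : c.Nonempty) (hcpt : ∀ K ∈ c, IsCompact K) :
    ∃ D : ℕ → Set M, (∀ n, D n ∈ c) ∧ ∀ ε > 0, ∃ n, D n ⊆ thickening ε (⋂₀ c) := by
  have : Nonempty c := hne.to_subtype
  have hdir : DirectedOn (· ⊇ ·) c := IsChain.directedOn (r := (· ≥ ·)) hc.symm
  have hsub : ∀ ε > 0, ∃ K : c, (K : Set M) ⊆ thickening ε (⋂₀ c) := fun ε hε =>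
    exists_subset_nhds_of_isCompact hdir.directed_val (fun K => hcpt K K.2) fun x hx =>
      isOpen_thickening.mem_nhds
        (self_subset_thickening hε _ (by rwa [sInter_eq_iInter]))
  choose D hD using fun n : ℕ => hsub (1 / (n + 1)) Nat.one_div_pos_of_nat
  refine ⟨fun n => D n, fun n => (D n).2, fun ε hε => ?_⟩
  obtain ⟨n, hn⟩ := exists_nat_one_div_lt hε
  exact ⟨n, (hD n).trans (thickening_mono hn.le _)⟩

variable [MeasurableSpace M] [OpensMeasurableSpace M]

lemma measurable_visitFreq (hf : Measurable f) (K : Set M) (ε : ℝ) (n : ℕ) :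
    Measurable fun x => visitFreq f K ε x n := by
  simp only [visitFreq, Finset.card_filter, Nat.cast_sum, Nat.cast_ite, Nat.cast_one,
    Nat.cast_zero]
  refine (Finset.measurable_sum _ fun j _ => Measurable.ite ?_ measurable_const
    measurable_const).div_const _
  exact measurableSet_lt ((continuous_infDist_pt K).measurable.comp (hf.iterate j))
    measurable_const

lemma measurableSet_statBasin (hf : Measurable f) (K : Set M) :
    MeasurableSet (statBasin f K) := by
  have hbasin : statBasin f K =
      ⋂ n : ℕ, {x | Tendsto (fun k => visitFreq f K (1 / (n + 1)) x k) atTop (𝓝 1)} := by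
    refine Subset.antisymm (fun x hx => mem_iInter.2 fun n => hx _ Nat.one_div_pos_of_nat)
      fun x hx => mem_statBasin_of_forall_tendsto_visitFreq fun ε hε => ?_
    obtain ⟨n, hn⟩ := exists_nat_one_div_lt hε
    exact ⟨K, _, mem_iInter.1 hx n, fun y hy => hy.trans hn⟩
  rw [hbasin]
  exact MeasurableSet.iInter fun n =>
    measurableSet_tendsto _ fun k => measurable_visitFreq hf K _ k

end Basin

def IsObservableStatAttractor {M : Type*} [MetricSpace M] [MeasurableSpace M] (m : Measure M)
    (f : M → M) (M' : Set M) (α : ℝ) (K : Set M) : Prop :=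
  K.Nonempty ∧ IsCompact K ∧ f ⁻¹' K = K ∧ ENNReal.ofReal α ≤ m (statBasin f K ∩ M')

theorem IsObservableStatAttractor.sInter {M : Type*} [MetricSpace M] [MeasurableSpace M]
    [OpensMeasurableSpace M] {m : Measure M} [IsFiniteMeasure m] {f : M → M} (hf : Measurable f)
    {M' : Set M} (hM' : MeasurableSet M') {α : ℝ} {c : Set (Set M)}
    (hcS : ∀ K ∈ c, IsObservableStatAttractor m f M' α K) (hc : IsChain (· ⊆ ·) c)
    (hne : c.Nonempty) : IsObservableStatAttractor m f M' α (⋂₀ c) := by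
  obtain ⟨K₀, hK₀⟩ := hne
  have hcpt : ∀ K ∈ c, IsCompact K := fun K hK => (hcS K hK).2.1
  have : Nonempty c := ⟨⟨K₀, hK₀⟩⟩
  refine ⟨IsCompact.nonempty_sInter_of_directed_nonempty_isCompact_isClosed
      (IsChain.directedOn (r := (· ≥ ·)) hc.symm)
      (fun K hK => (hcS K hK).1) hcpt fun K hK => (hcpt K hK).isClosed,
    (hcpt K₀ hK₀).of_isClosed_subset (isClosed_sInter fun K hK => (hcpt K hK).isClosed)
      (sInter_subset_of_mem hK₀), ?_, ?_⟩
  · rw [preimage_sInter, sInter_eq_biInter]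
    exact iInter₂_congr fun K hK => (hcS K hK).2.2.1
  obtain ⟨D, hDc, hDK⟩ := hc.exists_seq_subset_thickening_sInter ⟨K₀, hK₀⟩ hcpt
  have hdir : Directed (· ⊇ ·) fun n => statBasin f (D n) ∩ M' := fun i j => by
    rcases hc.total (hDc i) (hDc j) with h | h
    · exact ⟨i, le_rfl, inter_subset_inter_left _ (statBasin_mono (hcS _ (hDc i)).1 h)⟩
    · exact ⟨j, inter_subset_inter_left _ (statBasin_mono (hcS _ (hDc j)).1 h), le_rfl⟩
  calc ENNReal.ofReal α ≤ ⨅ n, m (statBasin f (D n) ∩ M') :=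
        le_iInf fun n => (hcS _ (hDc n)).2.2.2
    _ = m (⋂ n, statBasin f (D n) ∩ M') :=
        (hdir.measure_iInter (fun n => ((measurableSet_statBasin hf _).inter hM').nullMeasurableSet)
          ⟨0, measure_ne_top _ _⟩).symm
    _ ≤ m (statBasin f (⋂₀ c) ∩ M') := by
        rw [← iInter_inter]
        exact measure_mono (inter_subset_inter_left _
          (iInter_statBasin_subset_statBasin (fun n => (hcS _ (hDc n)).1) hDK))

theorem exists_minimal_statAttractor_restricted_general {M : Type*} [MetricSpace M] [CompactSpace M]
    [MeasurableSpace M] [BorelSpace M] (m : Measure M) [IsProbabilityMeasure m]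
    (f : M → M) (hf : Measurable f) (α : ℝ)
    (M' : Set M) (hM' : MeasurableSet M')
    (hM'm : ENNReal.ofReal α ≤ m M') :
    ∃ K : Set M, K.Nonempty ∧ IsCompact K ∧ f ⁻¹' K = K ∧
      ENNReal.ofReal α ≤ m (statBasin f K ∩ M') ∧
      ∀ K' : Set M, K' ⊆ K → K' ≠ K → K'.Nonempty → IsCompact K' → f ⁻¹' K' = K' →
        ¬ ENNReal.ofReal α ≤ m (statBasin f K' ∩ M') := by
  have : Nonempty M := nonempty_of_isProbabilityMeasure m
  have huniv : IsObservableStatAttractor m f M' α univ :=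
    ⟨univ_nonempty, isCompact_univ, preimage_univ, by rwa [statBasin_univ, univ_inter]⟩
  obtain ⟨K, -, hK⟩ := zorn_superset_nonempty {K | IsObservableStatAttractor m f M' α K}
    (fun c hcS hc hne => ⟨⋂₀ c, IsObservableStatAttractor.sInter hf hM' hcS hc hne,
      fun _ => sInter_subset_of_mem⟩) univ huniv
  obtain ⟨hKne, hKcpt, hKinv, hKm⟩ := hK.prop
  refine ⟨K, hKne, hKcpt, hKinv, hKm, fun K' hK'K hK'K_ne hK'ne hK'cpt hK'inv hK'm => ?_⟩
  exact hK'K_ne (hK.eq_of_subset ⟨hK'ne, hK'cpt, hK'inv, hK'm⟩ hK'K)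

/-- existence of an `α`-observable statistical attractor minimal restricted
to a forward invariant set `M'` with `m(M') ≥ α > 0`. -/
theorem exists_minimal_statAttractor_restricted {M : Type*} [MetricSpace M] [CompactSpace M]
    [MeasurableSpace M] [BorelSpace M] (m : Measure M) [IsProbabilityMeasure m]
    (f : M → M) (hf : Measurable f) (α : ℝ) (hα : 0 < α)
    (M' : Set M) (hM' : MeasurableSet M') (hM'inv : M' ⊆ f ⁻¹' M')
    (hM'm : ENNReal.ofReal α ≤ m M') :
    ∃ K : Set M, K.Nonempty ∧ IsCompact K ∧ f ⁻¹' K = K ∧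
      ENNReal.ofReal α ≤ m (statBasin f K ∩ M') ∧
      ∀ K' : Set M, K' ⊆ K → K' ≠ K → K'.Nonempty → IsCompact K' → f ⁻¹' K' = K' →
        ¬ ENNReal.ofReal α ≤ m (statBasin f K' ∩ M') :=
  exists_minimal_statAttractor_restricted_general m f hf α M' hM' hM'm
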